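/- Let r, s ≥ 1 and let g₁,…,g_{r+s} : [0,1] → ℂ be continuous. Then the product of iterated integrals I(g₁,…,g_r) · I(g_{r+1},…,g_{r+s}) equals the sum, over all permutations σ of {1,…,r+s} such that σ⁻¹(i) < σ⁻¹(j) whenever i < j and either both i,j ≤ r or both i,j ≥ r+1, of the iterated integrals I(g_{σ(1)},…,g_{σ(r+s)}) (the shuffle product relation). -/
import Mathlib


open MeasureTheory

/-- The ordered simplex `{0 ≤ t₁ ≤ ⋯ ≤ t_r ≤ 1} ⊆ ℝʳ`. -/
def orderedSimplex (r : ℕ) : Set (Fin r → ℝ) :=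
  {t | Monotone t ∧ ∀ i, t i ∈ Set.Icc (0 : ℝ) 1}

/-- The iterated integral `I(g₁,…,g_r)` of continuous functions on `[0,1]`:
the integral of `g₁(t₁)⋯g_r(t_r)` over the ordered simplex. -/
noncomputable def iteratedIntegral (r : ℕ) (g : Fin r → ℝ → ℂ) : ℂ :=
  ∫ t in orderedSimplex r, ∏ i, g i (t i)

namespace ShuffleAux

def box (n : ℕ) : Set (Fin n → ℝ) := Set.pi Set.univ fun _ : Fin n => Set.Icc (0:ℝ) 1

lemma mem_box {n : ℕ} {x : Fin n → ℝ} : x ∈ box n ↔ ∀ i, x i ∈ Set.Icc (0:ℝ) 1 := by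
  simp [box, Pi.le_def, Set.mem_Icc, forall_and]

lemma isCompact_box (n : ℕ) : IsCompact (box n) := isCompact_univ_pi fun _ => isCompact_Icc

lemma measurableSet_box (n : ℕ) : MeasurableSet (box n) :=
  MeasurableSet.univ_pi fun _ => measurableSet_Icc

lemma measurableSet_orderedSimplex (n : ℕ) : MeasurableSet (orderedSimplex n) := by
  have h1 : MeasurableSet {t : Fin n → ℝ | Monotone t} := by
    have : {t : Fin n → ℝ | Monotone t} =
        ⋂ (i : Fin n), ⋂ (j : Fin n), ⋂ (_ : i ≤ j), {t : Fin n → ℝ | t i ≤ t j} := by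
      ext t
      simp only [Set.mem_iInter, Set.mem_setOf_eq]
      exact ⟨fun h i j hij => h hij, fun h a b hab => h a b hab⟩
    rw [this]
    exact MeasurableSet.iInter fun i => MeasurableSet.iInter fun j =>
      MeasurableSet.iInter fun _ =>
        measurableSet_le (measurable_pi_apply i) (measurable_pi_apply j)
  have h2 : MeasurableSet {t : Fin n → ℝ | ∀ i, t i ∈ Set.Icc (0:ℝ) 1} := by
    have : {t : Fin n → ℝ | ∀ i, t i ∈ Set.Icc (0:ℝ) 1} = box n := by
      ext t; simp [mem_box]
    rw [this]; exact measurableSet_box n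
  exact h1.inter h2

lemma D_null (n : ℕ) : volume {x : Fin n → ℝ | ¬ Function.Injective x} = 0 := by
  have hsub : {x : Fin n → ℝ | ¬ Function.Injective x} ⊆
      ⋃ (i : Fin n), ⋃ (j : Fin n), ⋃ (_ : i ≠ j), {x : Fin n → ℝ | x i = x j} := by
    intro x hx
    simp only [Function.Injective, not_forall] at hx
    obtain ⟨i, j, hij, hne⟩ := hx
    exact Set.mem_iUnion.2 ⟨i, Set.mem_iUnion.2 ⟨j, Set.mem_iUnion.2 ⟨hne, hij⟩⟩⟩
  refine measure_mono_null hsub ?_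
  refine measure_iUnion_null fun i => measure_iUnion_null fun j => measure_iUnion_null fun hij => ?_
  have hker : {x : Fin n → ℝ | x i = x j} ⊆
      (LinearMap.ker ((LinearMap.proj i : (Fin n → ℝ) →ₗ[ℝ] ℝ) - LinearMap.proj j) :
        Submodule ℝ (Fin n → ℝ)) := by
    intro x hx
    simp only [SetLike.mem_coe, LinearMap.mem_ker, LinearMap.sub_apply, LinearMap.proj_apply,
      sub_eq_zero]
    exact hx
  refine measure_mono_null hker (Measure.addHaar_submodule _ _ ?_)
  intro h
  rw [Submodule.eq_top_iff'] at h
  have h1 := h (Pi.single i (1:ℝ))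
  simp only [LinearMap.mem_ker, LinearMap.sub_apply, LinearMap.proj_apply] at h1
  rw [Pi.single_eq_same, Pi.single_eq_of_ne (Ne.symm hij)] at h1
  norm_num at h1

noncomputable def permEquiv {n : ℕ} (σ : Equiv.Perm (Fin n)) : (Fin n → ℝ) ≃ᵐ (Fin n → ℝ) :=
  MeasurableEquiv.piCongrLeft (fun _ => ℝ) (σ.symm : Fin n ≃ Fin n)

lemma permEquiv_apply {n : ℕ} (σ : Equiv.Perm (Fin n)) (x : Fin n → ℝ) :
    permEquiv σ x = fun k => x (σ k) := by
  funext b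
  have h := MeasurableEquiv.piCongrLeft_apply_apply (σ.symm : Fin n ≃ Fin n)
    (β := fun _ => ℝ) x (σ b)
  rwa [Equiv.symm_apply_apply] at h

lemma permEquiv_mp {n : ℕ} (σ : Equiv.Perm (Fin n)) :
    MeasurePreserving (permEquiv σ) volume volume :=
  volume_measurePreserving_piCongrLeft (fun _ => ℝ) (σ.symm : Fin n ≃ Fin n)

noncomputable def splitEquiv (r s : ℕ) : (Fin (r+s) → ℝ) ≃ᵐ (Fin r → ℝ) × (Fin s → ℝ) :=
  (MeasurableEquiv.piCongrLeft (fun _ => ℝ) finSumFinEquiv).symm.trans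
    (MeasurableEquiv.sumPiEquivProdPi fun _ => ℝ)

lemma splitEquiv_mp (r s : ℕ) : MeasurePreserving (splitEquiv r s) volume volume := by
  have h1 : MeasurePreserving
      (MeasurableEquiv.piCongrLeft (fun _ : Fin (r+s) => ℝ) finSumFinEquiv).symm volume volume :=
    (volume_measurePreserving_piCongrLeft (fun _ => ℝ) finSumFinEquiv).symm _
  have h2 : MeasurePreserving
      (MeasurableEquiv.sumPiEquivProdPi (fun _ : Fin r ⊕ Fin s => ℝ)) volume volume :=
    (volume_measurePreserving_sumPiEquivProdPi_symm (fun _ : Fin r ⊕ Fin s => ℝ)).symm _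
  exact h2.comp h1

lemma splitEquiv_apply (r s : ℕ) (x : Fin (r+s) → ℝ) :
    splitEquiv r s x =
      ((fun i => x (Fin.castAdd s i)), (fun i => x (Fin.natAdd r i))) := by
  have h1 : (MeasurableEquiv.piCongrLeft (fun _ : Fin (r+s) => ℝ) finSumFinEquiv).symm x
      = fun a => x (finSumFinEquiv a) := by
    funext a
    simp [MeasurableEquiv.piCongrLeft, MeasurableEquiv.symm,
      Equiv.piCongrLeft, Equiv.piCongrLeft']
  show (MeasurableEquiv.sumPiEquivProdPi fun _ => ℝ)
      ((MeasurableEquiv.piCongrLeft (fun _ : Fin (r+s) => ℝ) finSumFinEquiv).symm x) = _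
  rw [h1]
  ext i
  · simp [MeasurableEquiv.sumPiEquivProdPi, Equiv.sumPiEquivProdPi]
  · simp [MeasurableEquiv.sumPiEquivProdPi, Equiv.sumPiEquivProdPi]

set_option maxRecDepth 8000 in
lemma chains_iff {r s : ℕ} (x : Fin (r+s) → ℝ) :
    ((Monotone fun i : Fin r => x (Fin.castAdd s i)) ∧
      (Monotone fun i : Fin s => x (Fin.natAdd r i)))
    ↔ ∀ i j : Fin (r+s), i < j → ((j:ℕ) < r ∨ r ≤ (i:ℕ)) → x i ≤ x j := by
  constructor
  · rintro ⟨h1, h2⟩ i j hij hcond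
    rcases hcond with hj | hi
    · have hi' : (i:ℕ) < r := lt_trans hij hj
      have hab : (⟨(i:ℕ), hi'⟩ : Fin r) ≤ ⟨(j:ℕ), hj⟩ := by
        simp only [Fin.mk_le_mk]; exact le_of_lt hij
      have hx : x (Fin.castAdd s ⟨(i:ℕ), hi'⟩) ≤ x (Fin.castAdd s ⟨(j:ℕ), hj⟩) := h1 hab
      have e1 : Fin.castAdd s ⟨(i:ℕ), hi'⟩ = i := by ext; simp
      have e2 : Fin.castAdd s ⟨(j:ℕ), hj⟩ = j := by ext; simp
      rwa [e1, e2] at hx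
    · have hi1 : (i:ℕ) - r < s := by omega
      have hj1 : (j:ℕ) - r < s := by
        have := j.isLt; have := (Fin.lt_def.mp hij); omega
      have hab : (⟨(i:ℕ) - r, hi1⟩ : Fin s) ≤ ⟨(j:ℕ) - r, hj1⟩ := by
        simp only [Fin.mk_le_mk]; have := Fin.lt_def.mp hij; omega
      have hx : x (Fin.natAdd r ⟨(i:ℕ) - r, hi1⟩) ≤ x (Fin.natAdd r ⟨(j:ℕ) - r, hj1⟩) := h2 hab
      have e1 : Fin.natAdd r ⟨(i:ℕ) - r, hi1⟩ = i := by ext; simp; omega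
      have e2 : Fin.natAdd r ⟨(j:ℕ) - r, hj1⟩ = j := by
        ext; simp; have := Fin.lt_def.mp hij; omega
      rwa [e1, e2] at hx
  · intro H
    constructor
    · intro a b hab
      rcases eq_or_lt_of_le hab with h | h
      · rw [h]
      · exact H (Fin.castAdd s a) (Fin.castAdd s b)
          (by rw [Fin.lt_def]; simpa using Fin.lt_def.mp h)
          (Or.inl (by simp))
    · intro a b hab
      rcases eq_or_lt_of_le hab with h | h
      · rw [h]
      · exact H (Fin.natAdd r a) (Fin.natAdd r b)
          (by rw [Fin.lt_def]; simpa using Fin.lt_def.mp h)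
          (Or.inr (by simp))

end ShuffleAux

/-- The shuffle product relation for iterated integrals: for continuous
`g₁,…,g_{r+s} : [0,1] → ℂ`, the product `I(g₁,…,g_r)·I(g_{r+1},…,g_{r+s})`
equals the sum over shuffle permutations `σ` of `I(g_{σ(1)},…,g_{σ(r+s)})`. -/
theorem iteratedIntegral_shuffle (r s : ℕ) (hr : 1 ≤ r) (hs : 1 ≤ s)
    (g : Fin (r + s) → ℝ → ℂ)
    (hg : ∀ i, ContinuousOn (g i) (Set.Icc (0 : ℝ) 1)) :
    iteratedIntegral r (fun i => g (Fin.castAdd s i)) *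
        iteratedIntegral s (fun i => g (Fin.natAdd r i)) =
      ∑ σ ∈ Finset.univ.filter
          (fun σ : Equiv.Perm (Fin (r + s)) =>
            ∀ i j : Fin (r + s), i < j →
              (((j : ℕ) < r) ∨ (r ≤ (i : ℕ))) → σ.symm i < σ.symm j),
        iteratedIntegral (r + s) (fun k => g (σ k)) := by
  set Sh : Finset (Equiv.Perm (Fin (r+s))) := Finset.univ.filter
      (fun σ : Equiv.Perm (Fin (r + s)) =>
        ∀ i j : Fin (r + s), i < j →
          (((j : ℕ) < r) ∨ (r ≤ (i : ℕ))) → σ.symm i < σ.symm j) with hSh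
  set f : (Fin (r+s) → ℝ) → ℂ := fun x => ∏ i, g i (x i) with hf
  set T : Set (Fin (r+s) → ℝ) :=
    {x | (∀ i j : Fin (r+s), i < j → ((j:ℕ) < r ∨ r ≤ (i:ℕ)) → x i ≤ x j) ∧
      ∀ i, x i ∈ Set.Icc (0:ℝ) 1} with hTdef
  set S : Equiv.Perm (Fin (r+s)) → Set (Fin (r+s) → ℝ) :=
    fun σ => {x | (fun k => x (σ k)) ∈ orderedSimplex (r+s)} with hSdef
  set Dset : Set (Fin (r+s) → ℝ) := {x | ¬ Function.Injective x} with hDdef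
  have hfc : ContinuousOn f (ShuffleAux.box (r+s)) := by
    apply continuousOn_finset_prod
    intro i _
    exact (hg i).comp (continuous_apply i).continuousOn
      (fun x hx => (ShuffleAux.mem_box.mp hx) i)
  have hfint : IntegrableOn f (ShuffleAux.box (r+s)) :=
    hfc.integrableOn_compact (ShuffleAux.isCompact_box (r+s))
  have hSsub : ∀ σ, S σ ⊆ ShuffleAux.box (r+s) := by
    intro σ x hx
    rw [ShuffleAux.mem_box]
    intro i
    have := hx.2 (σ.symm i)
    simpa using this
  have hSmeas : ∀ σ, MeasurableSet (S σ) := by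
    intro σ
    have : S σ = (ShuffleAux.permEquiv σ) ⁻¹' orderedSimplex (r+s) := by
      ext x
      simp [hSdef, Set.mem_preimage, ShuffleAux.permEquiv_apply]
    rw [this]
    exact (ShuffleAux.measurableSet_orderedSimplex _).preimage
      (ShuffleAux.permEquiv σ).measurable
  have hDmeas : MeasurableSet Dset := by
    have : Dset = ⋃ (i : Fin (r+s)), ⋃ (j : Fin (r+s)), ⋃ (_ : i ≠ j),
        {x : Fin (r+s) → ℝ | x i = x j} := by
      ext x
      simp only [hDdef, Set.mem_setOf_eq, Set.mem_iUnion, Function.Injective, not_forall]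
      constructor
      · rintro ⟨i, j, hij, hne⟩; exact ⟨i, j, hne, hij⟩
      · rintro ⟨i, j, hne, hij⟩; exact ⟨i, j, hij, hne⟩
    rw [this]
    exact MeasurableSet.iUnion fun i => MeasurableSet.iUnion fun j =>
      MeasurableSet.iUnion fun _ =>
        measurableSet_eq_fun (measurable_pi_apply i) (measurable_pi_apply j)
  have hDnull : volume Dset = 0 := ShuffleAux.D_null (r+s)
  have hSh_mem : ∀ σ, σ ∈ Sh ↔ ∀ i j : Fin (r+s), i < j →
      ((j:ℕ) < r ∨ r ≤ (i:ℕ)) → σ.symm i < σ.symm j := by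
    intro σ; simp [hSh]
  have hsubT : ∀ σ ∈ Sh, S σ \ Dset ⊆ T \ Dset := by
    intro σ hσ x hx
    obtain ⟨hxS, hxD⟩ := hx
    refine ⟨⟨fun i j hij hcond => ?_, fun i => by simpa using (hxS.2 (σ.symm i))⟩, hxD⟩
    have hlt := (hSh_mem σ).mp hσ i j hij hcond
    have := hxS.1 (le_of_lt hlt)
    simpa using this
  have hsupT : T \ Dset ⊆ ⋃ σ ∈ Sh, (S σ \ Dset) := by
    intro x hx
    obtain ⟨⟨hchain, hbox⟩, hxD⟩ := hx
    have hinj : Function.Injective x := not_not.mp hxD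
    set σ := Tuple.sort x with hσdef
    have hmono : Monotone (x ∘ σ) := Tuple.monotone_sort x
    have hstrict : StrictMono (x ∘ σ) := hmono.strictMono_of_injective (hinj.comp σ.injective)
    have hxS : x ∈ S σ := ⟨hmono, fun k => hbox (σ k)⟩
    have hσSh : σ ∈ Sh := by
      rw [hSh_mem]
      intro i j hij hcond
      have hle : x i ≤ x j := hchain i j hij hcond
      have hne : x i ≠ x j := fun h => hij.ne (hinj h)
      have hlt : x i < x j := lt_of_le_of_ne hle hne
      rw [← hstrict.lt_iff_lt]
      simpa using hlt
    exact Set.mem_biUnion hσSh ⟨hxS, hxD⟩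
  have hdisj : (↑Sh : Set (Equiv.Perm (Fin (r+s)))).Pairwise
      (Function.onFun Disjoint fun σ => S σ \ Dset) := by
    intro σ _ τ _ hne
    rw [Function.onFun, Set.disjoint_left]
    rintro x ⟨hxσ, hxD⟩ ⟨hxτ, _⟩
    have hinj : Function.Injective x := not_not.mp hxD
    have h := Tuple.unique_monotone (f := x) (σ := σ) (τ := τ) hxσ.1 hxτ.1
    exact hne (Equiv.ext fun k => hinj (congrFun h k))
  have hcover : T \ Dset = ⋃ σ ∈ Sh, (S σ \ Dset) :=
    Set.Subset.antisymm hsupT (Set.iUnion₂_subset hsubT)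
  have hTpre : (ShuffleAux.splitEquiv r s) ⁻¹' (orderedSimplex r ×ˢ orderedSimplex s) = T := by
    ext x
    simp only [Set.mem_preimage, ShuffleAux.splitEquiv_apply, Set.mem_prod, hTdef,
      Set.mem_setOf_eq, orderedSimplex]
    constructor
    · rintro ⟨⟨m1, b1⟩, ⟨m2, b2⟩⟩
      refine ⟨(ShuffleAux.chains_iff x).mp ⟨m1, m2⟩, ?_⟩
      intro i
      rcases lt_or_ge (i:ℕ) r with h | h
      · have e : Fin.castAdd s ⟨(i:ℕ), h⟩ = i := by ext; simp
        have := b1 ⟨(i:ℕ), h⟩; rwa [e] at this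
      · have hi1 : (i:ℕ) - r < s := by have := i.isLt; omega
        have e : Fin.natAdd r ⟨(i:ℕ)-r, hi1⟩ = i := by ext; simp; omega
        have := b2 ⟨(i:ℕ)-r, hi1⟩; rwa [e] at this
    · rintro ⟨hchain, hbox⟩
      obtain ⟨m1, m2⟩ := (ShuffleAux.chains_iff x).mpr hchain
      exact ⟨⟨m1, fun i => hbox _⟩, ⟨m2, fun i => hbox _⟩⟩
  have hTmeas : MeasurableSet T := by
    rw [← hTpre]
    exact ((ShuffleAux.measurableSet_orderedSimplex r).prod
      (ShuffleAux.measurableSet_orderedSimplex s)).preimage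
      (ShuffleAux.splitEquiv r s).measurable
  have hR : ∀ σ : Equiv.Perm (Fin (r+s)),
      iteratedIntegral (r+s) (fun k => g (σ k)) = ∫ x in S σ, f x := by
    intro σ
    rw [iteratedIntegral,
      ← (ShuffleAux.permEquiv_mp σ).setIntegral_preimage_emb
        (ShuffleAux.permEquiv σ).measurableEmbedding]
    have hpre : (ShuffleAux.permEquiv σ) ⁻¹' orderedSimplex (r+s) = S σ := by
      ext x; simp [Set.mem_preimage, ShuffleAux.permEquiv_apply, hSdef]
    rw [hpre]
    refine setIntegral_congr_fun (hSmeas σ) (fun x _ => ?_)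
    simp only [ShuffleAux.permEquiv_apply]
    exact Equiv.prod_comp σ (fun i => g i (x i))
  have hL : iteratedIntegral r (fun i => g (Fin.castAdd s i)) *
      iteratedIntegral s (fun i => g (Fin.natAdd r i)) = ∫ x in T, f x := by
    rw [iteratedIntegral, iteratedIntegral, ← MeasureTheory.integral_prod_mul,
      Measure.prod_restrict, ← Measure.volume_eq_prod,
      ← (ShuffleAux.splitEquiv_mp r s).setIntegral_preimage_emb
        (ShuffleAux.splitEquiv r s).measurableEmbedding, hTpre]
    refine setIntegral_congr_fun hTmeas (fun x _ => ?_)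
    simp only [ShuffleAux.splitEquiv_apply]
    exact (Fin.prod_univ_add (f := fun k => g k (x k))).symm
  rw [hL, Finset.sum_congr rfl (fun σ _ => hR σ)]
  calc ∫ x in T, f x
      = ∫ x in T \ Dset, f x :=
        (setIntegral_congr_set (diff_null_ae_eq_self hDnull)).symm
    _ = ∑ σ ∈ Sh, ∫ x in S σ \ Dset, f x := by
        rw [hcover]
        exact integral_biUnion_finset Sh (fun σ _ => (hSmeas σ).diff hDmeas) hdisj
          (fun σ _ => hfint.mono_set ((Set.diff_subset).trans (hSsub σ)))
    _ = ∑ σ ∈ Sh, ∫ x in S σ, f x := Finset.sum_congr rfl fun σ _ =>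
        setIntegral_congr_set (diff_null_ae_eq_self hDnull)
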